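/- Let m ≥ 2 be an integer, c ∈ ℝ, α > 0, and let p(n) ∈ [0,1] be a sequence. (i) If p(n) ≥ (1+α)·(log n + c)/n for all sufficiently large n, then there exists a constant C > 0 such that the probability that B_m(n, p(n)) admits a 3-directing word of length at most C·n·log n tends to 1 as n → ∞. (ii) If p(n) ≤ (1−α)·(log n + c)/n for all sufficiently large n, then the probability that B_m(n, p(n)) is 3-directable tends to 0 as n → ∞. -/

import Mathlib

open Matrix Filter

/-- The 0/1 matrix (over `ℕ`) associated to a Boolean matrix of entries. -/
def toMat {n : ℕ} (b : Fin n → Fin n → Bool) : Matrix (Fin n) (Fin n) ℕ :=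
  Matrix.of fun i j => if b i j then 1 else 0

open Classical in
/-- The probability that the random set `B_m(n, p)` of `m` independent random `n × n`
binary matrices, whose `m · n²` entries are i.i.d. Bernoulli(`p`), satisfies `E`. -/
noncomputable def bernoulliProb (n m : ℕ) (p : ℝ)
    (E : (Fin m → Matrix (Fin n) (Fin n) ℕ) → Prop) : ℝ :=
  ∑ b : Fin m → Fin n → Fin n → Bool,
    if E (fun k => toMat (b k)) then
      ∏ k : Fin m, ∏ i : Fin n, ∏ j : Fin n, (if b k i j then p else 1 - p)
    else 0

/-- The set `M` admits a 3-directing word of length at most `L`: there is a nonempty word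
`w` of length at most `L` whose product has an entrywise positive column. -/
def ThreeDirWithin {n m : ℕ} (M : Fin m → Matrix (Fin n) (Fin n) ℕ) (L : ℝ) : Prop :=
  ∃ w : List (Fin m), w ≠ [] ∧ (w.length : ℝ) ≤ L ∧
    ∃ j, ∀ i, 0 < (w.map M).prod i j

/-- The set `M` is 3-directable: some nonempty product of its elements has an entrywise
positive column. -/
def Is3Directable {n m : ℕ} (M : Fin m → Matrix (Fin n) (Fin n) ℕ) : Prop :=
  ∃ w : List (Fin m), w ≠ [] ∧ ∃ j, ∀ i, 0 < (w.map M).prod i j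

/-!
(i) With high probability a single one of the matrices, `B`, already directs: if the digraph of
its positive entries is strongly connected and has a loop at `j`, then column `j` of `B ^ n` is
positive. Strong connectivity fails only if some set of `k` rows, `0 < k < n`, has no entry
leaving it, and the union bound `∑ C(n,k) (1 - p) ^ (k (n - k))` tends to `0` once
`n p ≥ (1 + δ) log n`; a loop is missing with probability `(1 - p) ^ n → 0`.

(ii) The first letter of a directing word has no zero row. One matrix has no zero row with
probability `(1 - (1 - p) ^ n) ^ n ≤ exp (-n (1 - p) ^ n)`, and `n (1 - p) ^ n → ∞` below the
threshold; a union bound over the `m` matrices concludes.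
-/

open Finset

section WeightedProbability

variable {Ω : Type*} [Fintype Ω] {W : Ω → ℝ}

open Classical in
noncomputable def wprob (W : Ω → ℝ) (E : Ω → Prop) : ℝ :=
  ∑ ω, if E ω then W ω else 0

lemma wprob_nonneg (hW : ∀ ω, 0 ≤ W ω) (E : Ω → Prop) : 0 ≤ wprob W E :=
  sum_nonneg fun ω _ => by split_ifs <;> simp [hW ω]

lemma wprob_mono (hW : ∀ ω, 0 ≤ W ω) {E F : Ω → Prop} (h : ∀ ω, E ω → F ω) :
    wprob W E ≤ wprob W F :=
  sum_le_sum fun ω _ => by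
    by_cases hE : E ω
    · simp [hE, h ω hE]
    · split_ifs <;> simp [hW ω]

lemma wprob_le_one (hW : ∀ ω, 0 ≤ W ω) (h1 : ∑ ω, W ω = 1) (E : Ω → Prop) :
    wprob W E ≤ 1 :=
  h1 ▸ sum_le_sum fun ω _ => by split_ifs <;> simp [hW ω]

lemma wprob_not (h1 : ∑ ω, W ω = 1) (E : Ω → Prop) :
    wprob W (fun ω => ¬ E ω) = 1 - wprob W E := by
  rw [eq_sub_iff_add_eq, wprob, wprob, ← sum_add_distrib, ← h1]
  exact sum_congr rfl fun ω _ => by by_cases hE : E ω <;> simp [hE]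

lemma wprob_or_le (hW : ∀ ω, 0 ≤ W ω) (E F : Ω → Prop) :
    wprob W (fun ω => E ω ∨ F ω) ≤ wprob W E + wprob W F := by
  rw [wprob, wprob, wprob, ← sum_add_distrib]
  exact sum_le_sum fun ω _ => by
    by_cases hE : E ω <;> by_cases hF : F ω <;> simp [hE, hF, hW ω]

lemma wprob_exists_mem_le {ι : Type*} (hW : ∀ ω, 0 ≤ W ω) (s : Finset ι)
    (E : ι → Ω → Prop) :
    wprob W (fun ω => ∃ i ∈ s, E i ω) ≤ ∑ i ∈ s, wprob W (E i) := by
  classical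
  unfold wprob
  rw [sum_comm]
  refine sum_le_sum fun ω _ => ?_
  split_ifs with h
  · obtain ⟨i, hi, hE⟩ := h
    calc W ω = if E i ω then W ω else 0 := by rw [if_pos hE]
      _ ≤ ∑ j ∈ s, if E j ω then W ω else 0 :=
        single_le_sum (f := fun j => if E j ω then W ω else 0)
          (fun j _ => by split_ifs <;> simp [hW ω]) hi
  · exact sum_nonneg fun j _ => by split_ifs <;> simp [hW ω]

lemma wprob_exists_le {ι : Type*} [Fintype ι] (hW : ∀ ω, 0 ≤ W ω) (E : ι → Ω → Prop) :
    wprob W (fun ω => ∃ i, E i ω) ≤ ∑ i, wprob W (E i) := by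
  simpa using wprob_exists_mem_le hW univ E

end WeightedProbability

section ProductWeight

variable {ι κ : Type*} [Fintype ι] {w : κ → ℝ}

def piWeight (w : κ → ℝ) (x : ι → κ) : ℝ := ∏ i, w (x i)

lemma piWeight_nonneg (hw : ∀ a, 0 ≤ w a) (x : ι → κ) : 0 ≤ piWeight w x :=
  prod_nonneg fun i _ => hw (x i)

variable [DecidableEq ι] [Fintype κ]

lemma sum_piWeight (hw : ∑ a, w a = 1) : ∑ x : ι → κ, piWeight w x = 1 := by
  simp [piWeight, ← Fintype.prod_sum, hw]

lemma wprob_piWeight_forall (φ : ι → κ → Prop) :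
    wprob (piWeight w) (fun x => ∀ i, φ i (x i)) = ∏ i, wprob w (φ i) := by
  classical
  simp only [wprob, piWeight, Fintype.prod_sum]
  refine sum_congr rfl fun x _ => ?_
  rw [Fintype.prod_ite_zero]
  split_ifs <;> rfl

lemma wprob_piWeight_forall_mem (hw : ∑ a, w a = 1) (T : Finset ι) (φ : κ → Prop) :
    wprob (piWeight w) (fun x => ∀ i ∈ T, φ (x i)) = wprob w φ ^ #T := by
  have hmarg : ∀ i, wprob w (fun a => i ∈ T → φ a) = if i ∈ T then wprob w φ else 1 := by
    intro i
    split_ifs with hi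
    · simp [hi]
    · simp [hi, wprob, hw]
  rw [wprob_piWeight_forall (fun i a => i ∈ T → φ a), Fintype.prod_congr _ _ hmarg,
    Fintype.prod_ite_mem, prod_const]

lemma wprob_piWeight_apply (hw : ∑ a, w a = 1) (i : ι) (φ : κ → Prop) :
    wprob (piWeight w) (fun x => φ (x i)) = wprob w φ := by
  simpa using wprob_piWeight_forall_mem hw {i} φ

end ProductWeight

section Bernoulli

variable {p : ℝ}

def bernoulliWeight (p : ℝ) (b : Bool) : ℝ := if b then p else 1 - p

lemma bernoulliWeight_nonneg (hp : p ∈ Set.Icc (0 : ℝ) 1) (b : Bool) :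
    0 ≤ bernoulliWeight p b := by
  cases b <;> simp [bernoulliWeight, hp.1, hp.2]

lemma sum_bernoulliWeight : ∑ b, bernoulliWeight p b = 1 := by
  simp [bernoulliWeight]

lemma wprob_bernoulliWeight_eq_false : wprob (bernoulliWeight p) (· = false) = 1 - p := by
  simp [wprob, bernoulliWeight]

lemma bernoulliProb_eq_wprob {n m : ℕ} (E : (Fin m → Matrix (Fin n) (Fin n) ℕ) → Prop) :
    bernoulliProb n m p E =
      wprob (piWeight (piWeight (piWeight (bernoulliWeight p)))) fun b => E fun k => toMat (b k) :=
  rfl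

variable {ι : Type*} [Fintype ι] [DecidableEq ι]

lemma wprob_forall_mem_eq_false (T : Finset ι) :
    wprob (piWeight (bernoulliWeight p)) (fun r => ∀ j ∈ T, r j = false) = (1 - p) ^ #T := by
  rw [wprob_piWeight_forall_mem sum_bernoulliWeight T (· = false), wprob_bernoulliWeight_eq_false]

lemma wprob_diag_eq_false :
    wprob (piWeight (piWeight (bernoulliWeight p))) (fun f : ι → ι → Bool => ∀ i, f i i = false)
      = (1 - p) ^ Fintype.card ι := by
  rw [wprob_piWeight_forall fun (i : ι) (r : ι → Bool) => r i = false]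
  simp [wprob_piWeight_apply sum_bernoulliWeight _ (· = false), wprob_bernoulliWeight_eq_false]

lemma wprob_no_entry_leaving (S : Finset ι) :
    wprob (piWeight (piWeight (bernoulliWeight p)))
        (fun f : ι → ι → Bool => ∀ u ∈ S, ∀ v ∈ Sᶜ, f u v = false)
      = ((1 - p) ^ #Sᶜ) ^ #S := by
  rw [wprob_piWeight_forall_mem (sum_piWeight sum_bernoulliWeight) S
      fun r => ∀ v ∈ Sᶜ, r v = false,
    wprob_forall_mem_eq_false]

lemma wprob_rows_exists_eq_true :
    wprob (piWeight (piWeight (bernoulliWeight p)))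
        (fun f : ι → ι → Bool => ∀ i, ∃ j, f i j = true)
      = (1 - (1 - p) ^ Fintype.card ι) ^ Fintype.card ι := by
  have hrow : wprob (piWeight (bernoulliWeight p)) (fun r : ι → Bool => ∃ j, r j = true)
      = 1 - (1 - p) ^ Fintype.card ι := by
    rw [← card_univ, ← wprob_forall_mem_eq_false, ← wprob_not (sum_piWeight sum_bernoulliWeight)]
    simp
  rw [wprob_piWeight_forall fun (_ : ι) (r : ι → Bool) => ∃ j, r j = true, hrow, prod_const,
    card_univ]

end Bernoulli

section PositivePattern

lemma mul_apply_pos_iff {ι κ μ : Type*} [Fintype κ] (A : Matrix ι κ ℕ) (B : Matrix κ μ ℕ)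
    (i : ι) (j : μ) : 0 < (A * B) i j ↔ ∃ l, 0 < A i l ∧ 0 < B l j := by
  simp [Matrix.mul_apply, sum_pos_iff, CanonicallyOrderedAdd.mul_pos]

lemma toMat_pos_iff {n : ℕ} (b : Fin n → Fin n → Bool) (i j : Fin n) :
    0 < toMat b i j ↔ b i j = true := by
  cases h : b i j <;> simp [toMat, h]

variable {ι : Type*} [Fintype ι]

/-- Strong connectivity of the digraph of positive entries of `A`, phrased via cuts. -/
def IsStronglyConnected (A : Matrix ι ι ℕ) : Prop :=
  ∀ S : Finset ι, S.Nonempty → S ≠ univ → ∃ u ∈ S, ∃ v ∉ S, 0 < A u v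

/-- The rows `i` with `0 < (A ^ t) i j` form an increasing chain (thanks to the loop at `j`)
which grows strictly until it is everything (by strong connectivity), so it is everything
after `card ι` steps. -/
theorem pow_card_apply_pos [DecidableEq ι] {A : Matrix ι ι ℕ} (hA : IsStronglyConnected A)
    {j : ι} (hj : 0 < A j j) (i : ι) : 0 < (A ^ Fintype.card ι) i j := by
  set R : ℕ → Finset ι := fun t => {i | 0 < (A ^ t) i j} with hR
  have mem_R : ∀ t i, i ∈ R t ↔ 0 < (A ^ t) i j := by simp [hR]
  have mono : ∀ t, R t ⊆ R (t + 1) := fun t i hi => by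
    rw [mem_R, pow_succ, mul_apply_pos_iff]
    exact ⟨j, (mem_R t i).1 hi, hj⟩
  have j_mem : ∀ t, j ∈ R t := by
    intro t
    induction t with
    | zero => simp [mem_R]
    | succ t ih => exact mono t ih
  have grow : ∀ t, R t ≠ univ → R t ⊂ R (t + 1) := by
    intro t ht
    obtain ⟨u, hu, v, hv, huv⟩ :=
      hA (R t)ᶜ (nonempty_iff_ne_empty.2 (by rwa [ne_eq, compl_eq_empty_iff]))
        (fun h => mem_compl.1 (h.symm ▸ mem_univ j) (j_mem t))
    have hu' : u ∈ R (t + 1) := by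
      rw [mem_R, pow_succ', mul_apply_pos_iff]
      exact ⟨v, huv, (mem_R t v).1 (by simpa using hv)⟩
    exact (ssubset_iff_of_subset (mono t)).2 ⟨u, hu', mem_compl.1 hu⟩
  have card_R : ∀ t, R t = univ ∨ t < #(R t) := by
    intro t
    induction t with
    | zero => exact Or.inr (card_pos.2 ⟨j, j_mem 0⟩)
    | succ t ih =>
      by_cases h : R t = univ
      · exact Or.inl (univ_subset_iff.1 (h ▸ mono t))
      · have := card_lt_card (grow t h)
        have := ih.resolve_left h
        omega
  rcases card_R (Fintype.card ι) with h | h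
  · exact (mem_R _ i).1 (h ▸ mem_univ i)
  · exact absurd (card_le_univ _) h.not_ge

end PositivePattern

lemma threeDirWithin_of_isStronglyConnected {n m : ℕ} (M : Fin m → Matrix (Fin n) (Fin n) ℕ)
    (k : Fin m) (hM : IsStronglyConnected (M k)) {j : Fin n} (hj : 0 < M k j j) {L : ℝ}
    (hL : n ≤ L) : ThreeDirWithin M L := by
  refine ⟨List.replicate n k, ?_, by simpa using hL, j, fun i => ?_⟩
  · simpa using j.pos.ne'
  · simpa [List.map_replicate, List.prod_replicate] using pow_card_apply_pos hM hj i

lemma Is3Directable.exists_forall_exists_pos {n m : ℕ} {M : Fin m → Matrix (Fin n) (Fin n) ℕ}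
    (hM : Is3Directable M) : ∃ k, ∀ i, ∃ l, 0 < M k i l := by
  obtain ⟨_ | ⟨k, w⟩, hw, j, hj⟩ := hM
  · exact absurd rfl hw
  · refine ⟨k, fun i => ?_⟩
    obtain ⟨l, hl, -⟩ := (mul_apply_pos_iff _ _ i j).1 (by simpa using hj i)
    exact ⟨l, hl⟩

noncomputable def cutBound (n : ℕ) (p : ℝ) : ℝ :=
  ∑ k ∈ Ico 1 n, (n.choose k : ℝ) * (1 - p) ^ (k * (n - k))

lemma wprob_exists_no_entry_leaving_le {ι : Type*} [Fintype ι] [DecidableEq ι] {p : ℝ}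
    (hp : p ∈ Set.Icc (0 : ℝ) 1) :
    wprob (piWeight (piWeight (bernoulliWeight p)))
        (fun f : ι → ι → Bool => ∃ S : Finset ι, S.Nonempty ∧ S ≠ univ ∧
          ∀ u ∈ S, ∀ v ∈ Sᶜ, f u v = false)
      ≤ cutBound (Fintype.card ι) p := by
  have hW : ∀ f : ι → ι → Bool, 0 ≤ piWeight (piWeight (bernoulliWeight p)) f :=
    piWeight_nonneg (piWeight_nonneg (bernoulliWeight_nonneg hp))
  calc _ ≤ wprob (piWeight (piWeight (bernoulliWeight p)))
        (fun f : ι → ι → Bool => ∃ k ∈ Ico 1 (Fintype.card ι), ∃ S ∈ powersetCard k univ,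
          ∀ u ∈ S, ∀ v ∈ Sᶜ, f u v = false) := by
        refine wprob_mono hW fun f ⟨S, hne, hS, hf⟩ => ⟨#S, ?_, S, by simp, hf⟩
        simpa [Nat.one_le_iff_ne_zero, hne.ne_empty] using (card_lt_iff_ne_univ S).2 hS
    _ ≤ ∑ k ∈ Ico 1 (Fintype.card ι), ∑ S ∈ powersetCard k (univ : Finset ι),
        wprob (piWeight (piWeight (bernoulliWeight p)))
          (fun f : ι → ι → Bool => ∀ u ∈ S, ∀ v ∈ Sᶜ, f u v = false) :=
        (wprob_exists_mem_le hW _ _).trans (sum_le_sum fun k _ => wprob_exists_mem_le hW _ _)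
    _ = cutBound (Fintype.card ι) p := by
        refine sum_congr rfl fun k _ => ?_
        rw [sum_congr rfl fun S hS => by
          rw [wprob_no_entry_leaving, card_compl, (mem_powersetCard_univ.1 hS), ← pow_mul]]
        simp [mul_comm]

lemma one_sub_le_wprob_isStronglyConnected {n : ℕ} {p : ℝ} (hp : p ∈ Set.Icc (0 : ℝ) 1) :
    1 - ((1 - p) ^ n + cutBound n p) ≤
      wprob (piWeight (piWeight (bernoulliWeight p)))
        (fun f : Fin n → Fin n → Bool => IsStronglyConnected (toMat f) ∧ ∃ j, 0 < toMat f j j) := by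
  have hW : ∀ f : Fin n → Fin n → Bool, 0 ≤ piWeight (piWeight (bernoulliWeight p)) f :=
    piWeight_nonneg (piWeight_nonneg (bernoulliWeight_nonneg hp))
  have hbad : wprob (piWeight (piWeight (bernoulliWeight p)))
      (fun f : Fin n → Fin n → Bool => ¬ (IsStronglyConnected (toMat f) ∧ ∃ j, 0 < toMat f j j))
        ≤ cutBound n p + (1 - p) ^ n := by
    calc _ ≤ wprob (piWeight (piWeight (bernoulliWeight p)))
          (fun f : Fin n → Fin n → Bool => (∃ S : Finset (Fin n), S.Nonempty ∧ S ≠ univ ∧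
            ∀ u ∈ S, ∀ v ∈ Sᶜ, f u v = false) ∨ ∀ j, f j j = false) := by
          refine wprob_mono hW fun f hf => ?_
          rcases not_and_or.1 hf with hS | hj
          · left
            simpa [IsStronglyConnected, toMat_pos_iff] using hS
          · right
            simpa [toMat_pos_iff] using hj
      _ ≤ cutBound n p + (1 - p) ^ n := by
          refine (wprob_or_le hW _ _).trans (add_le_add ?_ ?_)
          · simpa using wprob_exists_no_entry_leaving_le hp (ι := Fin n)
          · simpa using (wprob_diag_eq_false (ι := Fin n) (p := p)).le
  rw [wprob_not (sum_piWeight (sum_piWeight sum_bernoulliWeight))] at hbad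
  linarith

section Estimates

open Real

lemma one_sub_pow_le_exp_neg {x : ℝ} (hx : x ≤ 1) (N : ℕ) : (1 - x) ^ N ≤ exp (-(N * x)) := by
  calc (1 - x) ^ N ≤ exp (-x) ^ N := pow_le_pow_left₀ (by linarith) (one_sub_le_exp_neg x) N
    _ = exp (-(N * x)) := by rw [← exp_nat_mul]; ring_nf

lemma exp_neg_mul_le_one_sub {α x : ℝ} (hα : 0 < α) (hx0 : 0 ≤ x) (hx : x ≤ α / (1 + α)) :
    exp (-((1 + α) * x)) ≤ 1 - x := by
  have hαx : (1 + α) * x ≤ α := by rwa [le_div_iff₀ (by linarith), mul_comm] at hx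
  have hx1 : 0 < 1 - x := by nlinarith
  have hinv : (1 - x)⁻¹ ≤ 1 + (1 + α) * x := by
    rw [inv_eq_one_div, div_le_iff₀ hx1]
    nlinarith [mul_le_mul_of_nonneg_left hαx hx0]
  rw [← le_log_iff_exp_le hx1]
  linarith [one_sub_inv_le_log_of_pos hx1]

/-- Bound for one term of `cutBound` with `2 k ≤ n`: small sets are handled by `C(n,k) ≤ n ^ k`,
sets with `k > ε n` by `C(n,k) ≤ 2 ^ n ≤ e ^ n` and `k (n - k) ≥ ε n · n / 2`. -/
lemma choose_mul_one_sub_pow_le_of_two_mul_le {n k : ℕ} (hk : 2 * k ≤ n) {p ε : ℝ}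
    (hp : p ∈ Set.Icc (0 : ℝ) 1) :
    n.choose k * (1 - p) ^ (k * (n - k)) ≤
      (n * exp (-((1 - ε) * (n * p)))) ^ k + exp (n - ε * n * (n * p) / 2) := by
  have hkn : (k : ℝ) ≤ n - k := by
    have : ((2 * k : ℕ) : ℝ) ≤ n := by exact_mod_cast hk
    push_cast at this
    linarith
  have hpow : (1 - p) ^ (k * (n - k)) ≤ exp (-(k * (n - k) * p)) := by
    have := one_sub_pow_le_exp_neg hp.2 (k * (n - k))
    rwa [Nat.cast_mul, Nat.cast_sub (by omega)] at this
  have hq : 0 ≤ (1 - p) ^ (k * (n - k)) := pow_nonneg (by linarith [hp.2]) _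
  rcases le_or_gt (k : ℝ) (ε * n) with hsmall | hlarge
  · have hchoose : (n.choose k : ℝ) ≤ (n : ℝ) ^ k := by exact_mod_cast Nat.choose_le_pow n k
    have hexp : exp (-(k * (n - k) * p)) ≤ exp (-((1 - ε) * (n * p))) ^ k := by
      have h : (1 - ε) * n ≤ n - k := by linarith
      rw [← exp_nat_mul]
      refine exp_le_exp.2 ?_
      nlinarith [mul_le_mul_of_nonneg_left h (mul_nonneg (Nat.cast_nonneg k) hp.1)]
    calc _ ≤ (n : ℝ) ^ k * exp (-((1 - ε) * (n * p))) ^ k :=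
          mul_le_mul hchoose (hpow.trans hexp) hq (by positivity)
      _ ≤ _ := by rw [← mul_pow]; exact le_add_of_nonneg_right (exp_nonneg _)
  · have hchoose : (n.choose k : ℝ) ≤ exp n := by
      calc (n.choose k : ℝ) ≤ 2 ^ n := by exact_mod_cast Nat.choose_le_two_pow n k
        _ ≤ exp 1 ^ n := pow_le_pow_left₀ (by norm_num) (by linarith [add_one_le_exp 1]) n
        _ = exp n := by rw [← exp_nat_mul, mul_one]
    have hexp : exp (-(k * (n - k) * p)) ≤ exp (-(ε * n * (n * p) / 2)) := by
      have h : ε * n * (n / 2) ≤ k * (n - k) :=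
        mul_le_mul hlarge.le (by linarith) (by positivity) (Nat.cast_nonneg k)
      refine exp_le_exp.2 ?_
      nlinarith [mul_le_mul_of_nonneg_right h hp.1]
    calc _ ≤ exp n * exp (-(ε * n * (n * p) / 2)) :=
          mul_le_mul hchoose (hpow.trans hexp) hq (exp_nonneg _)
      _ ≤ _ := by
          rw [← exp_add, ← sub_eq_add_neg]
          exact le_add_of_nonneg_left (by positivity)

lemma choose_mul_one_sub_pow_le {n k : ℕ} (hk : k ≤ n) {p ε : ℝ} (hp : p ∈ Set.Icc (0 : ℝ) 1) :
    n.choose k * (1 - p) ^ (k * (n - k)) ≤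
      (n * exp (-((1 - ε) * (n * p)))) ^ k + (n * exp (-((1 - ε) * (n * p)))) ^ (n - k) +
        exp (n - ε * n * (n * p) / 2) := by
  have hr : 0 ≤ (n : ℝ) * exp (-((1 - ε) * (n * p))) := by positivity
  rcases le_total (2 * k) n with h | h
  · linarith [choose_mul_one_sub_pow_le_of_two_mul_le (ε := ε) h hp, pow_nonneg hr (n - k)]
  · have := choose_mul_one_sub_pow_le_of_two_mul_le (n := n) (k := n - k) (ε := ε) (by omega) hp
    rw [Nat.choose_symm hk, Nat.sub_sub_self hk, mul_comm (n - k)] at this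
    linarith [pow_nonneg hr k]

lemma cutBound_le {n : ℕ} {p ε ρ : ℝ} (hp : p ∈ Set.Icc (0 : ℝ) 1)
    (hr : n * exp (-((1 - ε) * (n * p))) ≤ ρ) (hρ : ρ < 1) :
    cutBound n p ≤ 2 * (ρ / (1 - ρ)) + n * exp (n - ε * n * (n * p) / 2) := by
  set r := (n : ℝ) * exp (-((1 - ε) * (n * p)))
  have hr0 : 0 ≤ r := by positivity
  have hgeom : ∑ k ∈ Ico 1 n, ρ ^ k ≤ ρ / (1 - ρ) := by
    simpa using geom_sum_Ico_le_of_lt_one (m := 1) (n := n) (hr0.trans hr) hρ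
  have hreflect : ∑ k ∈ Ico 1 n, ρ ^ (n - k) = ∑ k ∈ Ico 1 n, ρ ^ k := by
    rw [sum_Ico_reflect _ _ (by omega)]
    simp
  calc cutBound n p ≤ ∑ k ∈ Ico 1 n, (ρ ^ k + ρ ^ (n - k) + exp (n - ε * n * (n * p) / 2)) := by
        refine sum_le_sum fun k hk =>
          (choose_mul_one_sub_pow_le (ε := ε) (mem_Ico.1 hk).2.le hp).trans ?_
        gcongr
    _ ≤ _ := by
        rw [sum_add_distrib, sum_add_distrib, hreflect, sum_const, Nat.card_Ico, nsmul_eq_mul]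
        have : ((n - 1 : ℕ) : ℝ) ≤ n := by exact_mod_cast Nat.sub_le n 1
        nlinarith [exp_nonneg (n - ε * n * (n * p) / 2)]

/-- Take `ε = δ / (2 (1 + δ))`, so that `(1 - ε) (1 + δ) = 1 + δ / 2` and `ε (1 + δ) = δ / 2`. -/
lemma cutBound_le_of_mul_log_le {n : ℕ} (hn : 0 < n) {p δ : ℝ} (hδ : 0 < δ)
    (hp : p ∈ Set.Icc (0 : ℝ) 1) (h : (1 + δ) * log n ≤ n * p) (hlog : 12 / δ ≤ log n) :
    cutBound n p ≤ 2 * (exp (-(δ / 2 * log n)) / (1 - exp (-(δ / 2 * log n)))) + exp (-n) := by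
  set ε := δ / (2 * (1 + δ)) with hε_def
  have hε : ε * (1 + δ) = δ / 2 := by rw [hε_def]; field_simp
  have hε0 : 0 ≤ ε := by positivity
  have hε1 : ε ≤ 1 := by rw [hε_def, div_le_iff₀ (by positivity)]; linarith
  have hn0 : (0 : ℝ) < n := by exact_mod_cast hn
  have hlog0 : 0 < log n := lt_of_lt_of_le (by positivity) hlog
  have hr : n * exp (-((1 - ε) * (n * p))) ≤ exp (-(δ / 2 * log n)) := by
    have := mul_le_mul_of_nonneg_left h (sub_nonneg.2 hε1)
    calc n * exp (-((1 - ε) * (n * p))) = exp (log n + -((1 - ε) * (n * p))) := by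
          rw [exp_add, exp_log hn0]
      _ ≤ exp (-(δ / 2 * log n)) := exp_le_exp.2 (by linear_combination this + log n * hε)
  have hM : n * exp (n - ε * n * (n * p) / 2) ≤ exp (-n) := by
    have hεnp : n * (δ / 2 * log n) ≤ n * (ε * (n * p)) := by
      refine mul_le_mul_of_nonneg_left ?_ hn0.le
      calc δ / 2 * log n = ε * ((1 + δ) * log n) := by linear_combination (-log n) * hε
        _ ≤ ε * (n * p) := mul_le_mul_of_nonneg_left h hε0
    have hδlog : n * 12 ≤ n * (δ * log n) :=
      mul_le_mul_of_nonneg_left (by rwa [div_le_iff₀ hδ, mul_comm] at hlog) hn0.le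
    calc n * exp (n - ε * n * (n * p) / 2) = exp (log n + (n - ε * n * (n * p) / 2)) := by
          rw [exp_add, exp_log hn0]
      _ ≤ exp (-n) := exp_le_exp.2 (by nlinarith [log_le_sub_one_of_pos hn0])
  have hρ : exp (-(δ / 2 * log n)) < 1 := exp_lt_one_iff.2 (by nlinarith)
  linarith [cutBound_le hp hr hρ]

end Estimates

section Asymptotics

open Real

lemma tendsto_log_natCast_atTop : Tendsto (fun n : ℕ => log n) atTop atTop :=
  tendsto_log_atTop.comp tendsto_natCast_atTop_atTop

lemma tendsto_exp_neg_mul_log {γ : ℝ} (hγ : 0 < γ) :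
    Tendsto (fun n : ℕ => exp (-(γ * log n))) atTop (nhds 0) :=
  tendsto_exp_atBot.comp
    (tendsto_neg_atTop_atBot.comp (tendsto_log_natCast_atTop.const_mul_atTop hγ))

lemma tendsto_cutBound {p : ℕ → ℝ} {δ : ℝ} (hδ : 0 < δ) (hp : ∀ n, p n ∈ Set.Icc (0 : ℝ) 1)
    (h : ∀ᶠ n : ℕ in atTop, (1 + δ) * log n ≤ n * p n) :
    Tendsto (fun n => cutBound n (p n)) atTop (nhds 0) := by
  have hρ := tendsto_exp_neg_mul_log (half_pos hδ)
  have hbound : Tendsto (fun n : ℕ => 2 * (exp (-(δ / 2 * log n)) /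
      (1 - exp (-(δ / 2 * log n)))) + exp (-(n : ℝ))) atTop (nhds 0) := by
    have hρ' : Tendsto (fun n : ℕ => 1 - exp (-(δ / 2 * log n))) atTop (nhds (1 - 0)) :=
      tendsto_const_nhds.sub hρ
    simpa using ((hρ.div hρ' (by norm_num)).const_mul 2).add
      (tendsto_exp_neg_atTop_nhds_zero.comp tendsto_natCast_atTop_atTop)
  refine tendsto_of_tendsto_of_tendsto_of_le_of_le' tendsto_const_nhds hbound
    (Eventually.of_forall fun n => sum_nonneg fun k _ => ?_) ?_
  · exact mul_nonneg (Nat.cast_nonneg _) (pow_nonneg (by linarith [(hp n).2]) _)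
  · filter_upwards [h, eventually_gt_atTop 0,
      tendsto_log_natCast_atTop.eventually_ge_atTop (12 / δ)] with n hn hn0 hlog
    exact cutBound_le_of_mul_log_le hn0 hδ (hp n) hn hlog

lemma tendsto_natCast_mul_one_sub_pow_atTop {p : ℕ → ℝ} {α c : ℝ} (hα : 0 < α)
    (hp : ∀ n, p n ∈ Set.Icc (0 : ℝ) 1)
    (h : ∀ᶠ n : ℕ in atTop, p n ≤ (1 - α) * (log n + c) / n) :
    Tendsto (fun n : ℕ => n * (1 - p n) ^ n) atTop atTop := by
  have hsmall : ∀ᶠ n : ℕ in atTop, p n ≤ α / (1 + α) := by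
    have hlim : Tendsto (fun n : ℕ => (1 - α) * (log n + c) / n) atTop (nhds 0) := by
      have hlog := (tendsto_pow_log_div_mul_add_atTop 1 0 1 one_ne_zero).comp
        tendsto_natCast_atTop_atTop
      have := (hlog.add (tendsto_const_div_atTop_nhds_zero_nat c)).const_mul (1 - α)
      refine Tendsto.congr' ?_ (by simpa using this)
      filter_upwards with n
      ring
    have hpos : (0 : ℝ) < α / (1 + α) := by positivity
    filter_upwards [h, hlim.eventually (eventually_le_nhds hpos)] with n h1 h2
    exact h1.trans h2
  have hlower : Tendsto (fun n : ℕ => exp (α ^ 2 * log n + -((1 - α ^ 2) * c))) atTop atTop :=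
    tendsto_exp_atTop.comp (tendsto_atTop_add_const_right _ _
      (tendsto_log_natCast_atTop.const_mul_atTop (by positivity)))
  refine tendsto_atTop_mono' _ ?_ hlower
  filter_upwards [h, hsmall, eventually_gt_atTop 0] with n hn hsm hn0
  have hn0' : (0 : ℝ) < n := by exact_mod_cast hn0
  have hnp : n * p n ≤ (1 - α) * (log n + c) := by rwa [le_div_iff₀ hn0', mul_comm] at hn
  calc exp (α ^ 2 * log n + -((1 - α ^ 2) * c))
      ≤ exp (log n + -((1 + α) * (n * p n))) := exp_le_exp.2 (by nlinarith)
    _ = n * exp (-((1 + α) * p n)) ^ n := by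
        rw [exp_add, exp_log hn0', ← exp_nat_mul]; ring_nf
    _ ≤ n * (1 - p n) ^ n := by
        gcongr
        exact exp_neg_mul_le_one_sub hα (hp n).1 hsm

end Asymptotics

section BernoulliProb

variable {n m : ℕ} {p : ℝ} (hp : p ∈ Set.Icc (0 : ℝ) 1)
include hp

lemma piWeight_bernoulliWeight_nonneg (b : Fin m → Fin n → Fin n → Bool) :
    0 ≤ piWeight (piWeight (piWeight (bernoulliWeight p))) b :=
  piWeight_nonneg (piWeight_nonneg (piWeight_nonneg (bernoulliWeight_nonneg hp))) b

lemma bernoulliProb_nonneg (E : (Fin m → Matrix (Fin n) (Fin n) ℕ) → Prop) :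
    0 ≤ bernoulliProb n m p E :=
  wprob_nonneg (piWeight_bernoulliWeight_nonneg hp) _

lemma bernoulliProb_le_one (E : (Fin m → Matrix (Fin n) (Fin n) ℕ) → Prop) :
    bernoulliProb n m p E ≤ 1 :=
  wprob_le_one (piWeight_bernoulliWeight_nonneg hp)
    (sum_piWeight (sum_piWeight (sum_piWeight sum_bernoulliWeight))) _

lemma one_sub_le_bernoulliProb_threeDirWithin (hm : 0 < m) {L : ℝ} (hL : n ≤ L) :
    1 - ((1 - p) ^ n + cutBound n p) ≤ bernoulliProb n m p (fun M => ThreeDirWithin M L) := by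
  rw [bernoulliProb_eq_wprob]
  calc _ ≤ _ := one_sub_le_wprob_isStronglyConnected hp
    _ = wprob (piWeight (piWeight (piWeight (bernoulliWeight p))))
          fun b : Fin m → Fin n → Fin n → Bool =>
            IsStronglyConnected (toMat (b ⟨0, hm⟩)) ∧ ∃ j, 0 < toMat (b ⟨0, hm⟩) j j :=
        (wprob_piWeight_apply (sum_piWeight (sum_piWeight sum_bernoulliWeight)) _ _).symm
    _ ≤ _ := wprob_mono (piWeight_bernoulliWeight_nonneg hp) fun b ⟨hS, _, hj⟩ =>
        threeDirWithin_of_isStronglyConnected _ ⟨0, hm⟩ hS hj hL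

lemma bernoulliProb_is3Directable_le :
    bernoulliProb n m p (fun M => Is3Directable M) ≤ m * (1 - (1 - p) ^ n) ^ n := by
  have hW := piWeight_bernoulliWeight_nonneg (n := n) (m := m) hp
  rw [bernoulliProb_eq_wprob]
  calc _ ≤ wprob (piWeight (piWeight (piWeight (bernoulliWeight p))))
        fun b : Fin m → Fin n → Fin n → Bool => ∃ k, ∀ i, ∃ j, b k i j = true :=
      wprob_mono hW fun b hb => by simpa [toMat_pos_iff] using hb.exists_forall_exists_pos
    _ ≤ ∑ k : Fin m, wprob (piWeight (piWeight (bernoulliWeight p)))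
        fun f : Fin n → Fin n → Bool => ∀ i, ∃ j, f i j = true := by
      refine (wprob_exists_le hW _).trans_eq (sum_congr rfl fun k _ => ?_)
      exact wprob_piWeight_apply (sum_piWeight (sum_piWeight sum_bernoulliWeight)) k
        (fun f : Fin n → Fin n → Bool => ∀ i, ∃ j, f i j = true)
    _ = m * (1 - (1 - p) ^ n) ^ n := by simp [wprob_rows_exists_eq_true]

end BernoulliProb

section Thresholds

open Real

theorem tendsto_bernoulliProb_threeDirWithin {m : ℕ} (hm : 0 < m) {c α : ℝ} (hα : 0 < α)
    {p : ℕ → ℝ} (hp : ∀ n, p n ∈ Set.Icc (0 : ℝ) 1)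
    (h : ∀ᶠ n : ℕ in atTop, (1 + α) * (log n + c) / n ≤ p n) {C : ℝ} (hC : 0 < C) :
    Tendsto (fun n : ℕ => bernoulliProb n m (p n)
      (fun M => ThreeDirWithin M (C * n * log n))) atTop (nhds 1) := by
  have hnp : ∀ᶠ n : ℕ in atTop, (1 + α / 2) * log n ≤ n * p n := by
    filter_upwards [h, eventually_gt_atTop 0,
      tendsto_log_natCast_atTop.eventually_ge_atTop (-(2 * (1 + α) * c / α))] with n hn hn0 hlog
    rw [div_le_iff₀ (by exact_mod_cast hn0)] at hn
    rw [neg_le, le_div_iff₀ hα] at hlog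
    nlinarith
  have hpow : Tendsto (fun n => (1 - p n) ^ n) atTop (nhds 0) := by
    refine tendsto_of_tendsto_of_tendsto_of_le_of_le' tendsto_const_nhds
      (tendsto_exp_neg_mul_log (show 0 < 1 + α / 2 by positivity))
      (Eventually.of_forall fun n => pow_nonneg (by linarith [(hp n).2]) n) ?_
    filter_upwards [hnp] with n hn
    exact (one_sub_pow_le_exp_neg (hp n).2 n).trans (exp_le_exp.2 (by linarith))
  have hlower : Tendsto (fun n => 1 - ((1 - p n) ^ n + cutBound n (p n))) atTop (nhds 1) := by
    simpa using tendsto_const_nhds.sub (hpow.add (tendsto_cutBound (half_pos hα) hp hnp))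
  refine tendsto_of_tendsto_of_tendsto_of_le_of_le' hlower tendsto_const_nhds ?_
    (Eventually.of_forall fun n => bernoulliProb_le_one (hp n) _)
  filter_upwards [tendsto_log_natCast_atTop.eventually_ge_atTop C⁻¹] with n hlog
  rw [inv_le_iff_one_le_mul₀' hC] at hlog
  exact one_sub_le_bernoulliProb_threeDirWithin (hp n) hm
    (by nlinarith [Nat.cast_nonneg (α := ℝ) n])

theorem tendsto_bernoulliProb_is3Directable {m : ℕ} {c α : ℝ} (hα : 0 < α)
    {p : ℕ → ℝ} (hp : ∀ n, p n ∈ Set.Icc (0 : ℝ) 1)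
    (h : ∀ᶠ n : ℕ in atTop, p n ≤ (1 - α) * (log n + c) / n) :
    Tendsto (fun n : ℕ => bernoulliProb n m (p n) (fun M => Is3Directable M)) atTop (nhds 0) := by
  have hbound : Tendsto (fun n : ℕ => m * exp (-(n * (1 - p n) ^ n))) atTop (nhds 0) := by
    simpa using (tendsto_exp_atBot.comp (tendsto_neg_atTop_atBot.comp
      (tendsto_natCast_mul_one_sub_pow_atTop hα hp h))).const_mul (m : ℝ)
  refine tendsto_of_tendsto_of_tendsto_of_le_of_le tendsto_const_nhds hbound
    (fun n => bernoulliProb_nonneg (hp n) _) fun n => ?_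
  have hq : (1 - p n) ^ n ≤ 1 := pow_le_one₀ (by linarith [(hp n).2]) (by linarith [(hp n).1])
  calc _ ≤ m * (1 - (1 - p n) ^ n) ^ n := bernoulliProb_is3Directable_le (hp n)
    _ ≤ m * exp (-(n * (1 - p n) ^ n)) := by gcongr; exact one_sub_pow_le_exp_neg hq n

end Thresholds

/-- Let `m ≥ 2`, `c ∈ ℝ`, `α > 0`, and `p n ∈ [0,1]`.
(i) If `p n ≥ (1+α)·(log n + c)/n` for all large `n`, then for some `C > 0` the probability
that `B_m(n, p n)` admits a 3-directing word of length at most `C·n·log n` tends to `1`.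
(ii) If `p n ≤ (1−α)·(log n + c)/n` for all large `n`, then the probability that
`B_m(n, p n)` is 3-directable tends to `0`. -/
theorem stmt9 (m : ℕ) (hm : 2 ≤ m) (c α : ℝ) (hα : 0 < α)
    (p : ℕ → ℝ) (hp : ∀ n, p n ∈ Set.Icc (0 : ℝ) 1) :
    ((∀ᶠ n : ℕ in atTop, (1 + α) * (Real.log n + c) / n ≤ p n) →
      ∃ C : ℝ, 0 < C ∧
        Tendsto (fun n : ℕ => bernoulliProb n m (p n)
            (fun M => ThreeDirWithin M (C * n * Real.log n))) atTop (nhds 1)) ∧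
    ((∀ᶠ n : ℕ in atTop, p n ≤ (1 - α) * (Real.log n + c) / n) →
      Tendsto (fun n : ℕ => bernoulliProb n m (p n)
          (fun M => Is3Directable M)) atTop (nhds 0)) :=
  ⟨fun h => ⟨1, one_pos, tendsto_bernoulliProb_threeDirWithin (by omega) hα hp h one_pos⟩,
    tendsto_bernoulliProb_is3Directable hα hp⟩
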